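/- arXiv:1407.1612 — 3 statements merged into one kernel-verified Lean document; each statement's English description precedes it below -/
import Mathlib

section
/- In GL(3,ℤ), the commutator relation [E₂₁F₂E₁₂F₁E₃₁⁻¹E₃₂, E₃₁F₃E₁₃F₁E₂₁⁻¹E₂₃] = 1 holds, where [X,Y] = X⁻¹Y⁻¹XY. -/
/-!
Both words are transvections with the same direction: their matrices are `1 + w aᵀ` and
`1 + w bᵀ` with `w = (1, 1, 1)` and `a = (-2, 2, 0)`, `b = (-2, 0, 2)` orthogonal to `w`.
Since `(w aᵀ)(w bᵀ) = (a ⬝ w) w bᵀ = 0`, both products equal `1 + w aᵀ + w bᵀ`, so the two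
words commute and their commutator is trivial.
-/

open Matrix

def Gamma2 (n : ℕ) : Subgroup (GL (Fin n) ℤ) :=
  (Matrix.GeneralLinearGroup.map (n := Fin n) (Int.castRingHom (ZMod 2))).ker

noncomputable def Emat (n : ℕ) (i j : Fin n) : Matrix (Fin n) (Fin n) ℤ :=
  1 + 2 • Matrix.single i j 1

noncomputable def Fmat (n : ℕ) (i : Fin n) : Matrix (Fin n) (Fin n) ℤ :=
  1 - 2 • Matrix.single i i 1

theorem Emat_eq_transvection {n : ℕ} (i j : Fin n) : Emat n i j = transvection i j 2 := by
  simp [Emat, transvection]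

theorem Matrix.GeneralLinearGroup.coe_inv_of_coe_eq_transvection {n R : Type*} [Fintype n]
    [DecidableEq n] [CommRing R] {i j : n} (hij : i ≠ j) {c : R} {u : GL n R}
    (hu : (u : Matrix n n R) = transvection i j c) :
    ((u⁻¹ : GL n R) : Matrix n n R) = transvection i j (-c) :=
  Units.inv_eq_of_mul_eq_one_right <| by
    rw [hu, transvection_mul_transvection_same i j hij, add_neg_cancel, transvection_zero]

theorem Matrix.commute_one_add_vecMulVec {n R : Type*} [Fintype n] [DecidableEq n] [Semiring R]
    {w a b : n → R} (ha : a ⬝ᵥ w = 0) (hb : b ⬝ᵥ w = 0) :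
    Commute (1 + vecMulVec w a) (1 + vecMulVec w b) := by
  simp only [Commute, SemiconjBy, add_mul, mul_add, one_mul, mul_one,
    vecMulVec_mul_vecMulVec, ha, hb, zero_smul, vecMulVec_zero, add_zero]
  abel

theorem inv_mul_inv_mul_mul_eq_one_of_commute {G : Type*} [Group G] {x y : G}
    (h : Commute x y) : x⁻¹ * y⁻¹ * x * y = 1 := by
  rw [mul_assoc, h.eq]
  group

theorem lantern_type_relation
    (E12 E13 E21 E23 E31 E32 F1 F2 F3 : GL (Fin 3) ℤ)
    (h12 : (E12 : Matrix (Fin 3) (Fin 3) ℤ) = Emat 3 0 1)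
    (h13 : (E13 : Matrix (Fin 3) (Fin 3) ℤ) = Emat 3 0 2)
    (h21 : (E21 : Matrix (Fin 3) (Fin 3) ℤ) = Emat 3 1 0)
    (h23 : (E23 : Matrix (Fin 3) (Fin 3) ℤ) = Emat 3 1 2)
    (h31 : (E31 : Matrix (Fin 3) (Fin 3) ℤ) = Emat 3 2 0)
    (h32 : (E32 : Matrix (Fin 3) (Fin 3) ℤ) = Emat 3 2 1)
    (hF1 : (F1 : Matrix (Fin 3) (Fin 3) ℤ) = Fmat 3 0)
    (hF2 : (F2 : Matrix (Fin 3) (Fin 3) ℤ) = Fmat 3 1)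
    (hF3 : (F3 : Matrix (Fin 3) (Fin 3) ℤ) = Fmat 3 2) :
    (E21 * F2 * E12 * F1 * E31⁻¹ * E32)⁻¹ * (E31 * F3 * E13 * F1 * E21⁻¹ * E23)⁻¹ *
      (E21 * F2 * E12 * F1 * E31⁻¹ * E32) * (E31 * F3 * E13 * F1 * E21⁻¹ * E23) = 1 := by
  have hX : ((E21 * F2 * E12 * F1 * E31⁻¹ * E32 : GL (Fin 3) ℤ) : Matrix (Fin 3) (Fin 3) ℤ) =
      1 + vecMulVec ![1, 1, 1] ![-2, 2, 0] := by
    simp only [Units.val_mul, h21, hF2, h12, hF1, h32,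
      GeneralLinearGroup.coe_inv_of_coe_eq_transvection (by decide)
        (h31.trans (Emat_eq_transvection 2 0))]
    decide
  have hY : ((E31 * F3 * E13 * F1 * E21⁻¹ * E23 : GL (Fin 3) ℤ) : Matrix (Fin 3) (Fin 3) ℤ) =
      1 + vecMulVec ![1, 1, 1] ![-2, 0, 2] := by
    simp only [Units.val_mul, h31, hF3, h13, hF1, h23,
      GeneralLinearGroup.coe_inv_of_coe_eq_transvection (by decide)
        (h21.trans (Emat_eq_transvection 1 0))]
    decide
  refine inv_mul_inv_mul_mul_eq_one_of_commute (Commute.units_val_iff.mp ?_)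
  rw [hX, hY]
  exact commute_one_add_vecMulVec (by decide) (by decide)
end

section
/- For each t with 1 ≤ t ≤ n (n ≥ 2), there is a short exact sequence 0 → ℤ^{n−1} → Γ₂(n)_{e_t} → Γ₂(n−1) → 1, where ℤ^{n−1} maps by sending the i-th generator to E_{ti} (indices shifted past t), and the second map deletes the t-th row and column. -/
/-!
Column `t` of a matrix fixing `e_t` is `e_t`, so deleting row and column `t` is multiplicative
on the stabilizer; it maps `Γ₂(n+1)_{e_t}` onto `Γ₂(n)`, split by `B ↦ diag(B, 1)` with the extra
index moved to position `t`. Its kernel consists of the matrices `1 + e_t rᵀ` with `r_t = 0` and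
`r` even. Because `rᵀ e_t = 0`, these multiply by adding the rows `r`, so `v ↦ 1 + e_t (2v)ᵀ`
(with `0` inserted at `t`) is an isomorphism from `ℤⁿ` onto the kernel.
-/

open Matrix

/-- The subgroup of `GL (Fin n) ℤ` fixing the standard basis vector `e_t`. -/
def colStab (n : ℕ) (t : Fin n) : Subgroup (GL (Fin n) ℤ) where
  carrier := {A | (A : Matrix (Fin n) (Fin n) ℤ).mulVec (Pi.single t 1) = Pi.single t 1}
  one_mem' := by
    show ((1 : GL (Fin n) ℤ) : Matrix (Fin n) (Fin n) ℤ) *ᵥ Pi.single t 1 = Pi.single t 1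
    rw [Units.val_one, Matrix.one_mulVec]
  mul_mem' := by
    intro a b ha hb
    simp only [Set.mem_setOf_eq] at *
    rw [Units.val_mul, ← Matrix.mulVec_mulVec, hb, ha]
  inv_mem' := by
    intro a ha
    simp only [Set.mem_setOf_eq] at *
    conv_lhs => rw [← ha]
    rw [Matrix.mulVec_mulVec, ← Units.val_mul, inv_mul_cancel, Units.val_one,
      Matrix.one_mulVec]

/-- The stabilizer of `e_t` in the level 2 congruence subgroup. -/
def gamma2Stab (n : ℕ) (t : Fin n) : Subgroup (GL (Fin n) ℤ) :=
  Gamma2 n ⊓ colStab n t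

section Unipotent

variable {R ι : Type*} [Semiring R] [Fintype ι] [DecidableEq ι]

theorem one_add_vecMulVec_mul_one_add_vecMulVec {u r s : ι → R} (hr : r ⬝ᵥ u = 0) :
    (1 + vecMulVec u r) * (1 + vecMulVec u s) = 1 + vecMulVec u (r + s) := by
  rw [mul_add, add_mul, add_mul, vecMulVec_mul_vecMulVec, hr, zero_smul, vecMulVec_zero,
    vecMulVec_add, mul_one, one_mul, mul_one, add_zero, add_assoc]

theorem one_add_vecMulVec_mulVec {u r x : ι → R} (hx : r ⬝ᵥ x = 0) :
    (1 + vecMulVec u r) *ᵥ x = x := by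
  rw [add_mulVec, one_mulVec, vecMulVec_mulVec, hx, MulOpposite.op_zero, zero_smul, add_zero]

end Unipotent

section FinMatrix

variable {R S : Type*} [Semiring R] [Semiring S] {n : ℕ} (t : Fin (n + 1))

theorem Fin.insertNth_zero_dotProduct_single (v : Fin n → R) :
    t.insertNth 0 v ⬝ᵥ Pi.single t 1 = 0 := by
  rw [dotProduct_single, Fin.insertNth_apply_same, zero_mul]

theorem Fin.insertNth_zero_single (i : Fin n) (c : R) :
    t.insertNth 0 (Pi.single i c) = (Pi.single (t.succAbove i) c : Fin (n + 1) → R) := by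
  rw [Fin.insertNth_eq_iff, Pi.single_eq_of_ne (Fin.ne_succAbove t i)]
  refine ⟨rfl, funext fun j => ?_⟩
  simp [Fin.removeNth, Pi.single_apply]

def rowUnipotent : Multiplicative (Fin n → R) →* Matrix (Fin (n + 1)) (Fin (n + 1)) R where
  toFun v := 1 + vecMulVec (Pi.single t 1) (t.insertNth 0 v.toAdd)
  map_one' := by simp
  map_mul' v w := by
    rw [one_add_vecMulVec_mul_one_add_vecMulVec (Fin.insertNth_zero_dotProduct_single t _),
      toAdd_mul, ← Fin.insertNth_add, add_zero]

theorem rowUnipotent_apply (v : Fin n → R) :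
    rowUnipotent t (.ofAdd v) = 1 + vecMulVec (Pi.single t 1) (t.insertNth 0 v) := rfl

theorem rowUnipotent_apply_self_succAbove (v : Fin n → R) (j : Fin n) :
    rowUnipotent t (.ofAdd v) t (t.succAbove j) = v j := by
  simp [rowUnipotent_apply, vecMulVec_apply, one_apply_ne (Fin.ne_succAbove t j)]

theorem rowUnipotent_apply_succAbove (v : Fin n → R) (i : Fin n) (j : Fin (n + 1)) :
    rowUnipotent t (.ofAdd v) (t.succAbove i) j = (1 : Matrix _ _ R) (t.succAbove i) j := by
  simp [rowUnipotent_apply, vecMulVec_apply]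

theorem rowUnipotent_mulVec_single (v : Fin n → R) :
    rowUnipotent t (.ofAdd v) *ᵥ Pi.single t 1 = Pi.single t 1 :=
  one_add_vecMulVec_mulVec (Fin.insertNth_zero_dotProduct_single t v)

theorem submatrix_rowUnipotent (v : Fin n → R) :
    (rowUnipotent t (.ofAdd v)).submatrix t.succAbove t.succAbove = 1 := by
  calc _ = (1 : Matrix (Fin (n + 1)) (Fin (n + 1)) R).submatrix t.succAbove t.succAbove := by
        ext i j
        exact rowUnipotent_apply_succAbove t v i _
    _ = 1 := submatrix_one _ Fin.succAbove_right_injective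

theorem map_rowUnipotent (f : R →+* S) (v : Fin n → R) :
    (rowUnipotent t (.ofAdd v)).map f = rowUnipotent t (.ofAdd (f ∘ v)) := by
  ext i j
  cases i using Fin.succAboveCases t <;> cases j using Fin.succAboveCases t <;>
    simp [rowUnipotent_apply, vecMulVec_apply, one_apply]

theorem rowUnipotent_injective : Function.Injective (rowUnipotent (R := R) t) := by
  intro v w h
  ext j
  have hj := congrFun (congrFun h t) (t.succAbove j)
  rwa [← ofAdd_toAdd v, ← ofAdd_toAdd w, rowUnipotent_apply_self_succAbove,
    rowUnipotent_apply_self_succAbove] at hj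

theorem submatrix_succAbove_mul {A B : Matrix (Fin (n + 1)) (Fin (n + 1)) R}
    (hA : ∀ i, A (t.succAbove i) t = 0) :
    (A * B).submatrix t.succAbove t.succAbove =
      A.submatrix t.succAbove t.succAbove * B.submatrix t.succAbove t.succAbove := by
  ext i j
  simp [mul_apply, Fin.sum_univ_succAbove _ t, hA]

theorem eq_rowUnipotent_of_submatrix_eq_one {A : Matrix (Fin (n + 1)) (Fin (n + 1)) R}
    (hcol : A *ᵥ Pi.single t 1 = Pi.single t 1)
    (hsub : A.submatrix t.succAbove t.succAbove = 1) :
    A = rowUnipotent t (.ofAdd fun j => A t (t.succAbove j)) := by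
  have hcol' i : A i t = (Pi.single t 1 : Fin (n + 1) → R) i := by
    simpa [mulVec_single_one] using congrFun hcol i
  have hsub' i j : A (t.succAbove i) (t.succAbove j) = (1 : Matrix _ _ R) i j :=
    congrFun (congrFun hsub i) j
  ext i j
  cases i using Fin.succAboveCases t <;> cases j using Fin.succAboveCases t <;>
    simp [hcol', hsub', rowUnipotent_apply, vecMulVec_apply, one_apply]

def insertRowCol : Matrix (Fin n) (Fin n) R →* Matrix (Fin (n + 1)) (Fin (n + 1)) R where
  toFun B := (fromBlocks B 0 0 (1 : Matrix Unit Unit R)).submatrix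
    ((finSuccEquiv' t).trans (Equiv.optionEquivSumPUnit _))
    ((finSuccEquiv' t).trans (Equiv.optionEquivSumPUnit _))
  map_one' := by rw [fromBlocks_one, submatrix_one_equiv]
  map_mul' B C := by
    rw [submatrix_mul_equiv, fromBlocks_multiply]
    simp

theorem insertRowCol_mulVec_single (B : Matrix (Fin n) (Fin n) R) :
    insertRowCol t B *ᵥ Pi.single t 1 = Pi.single t 1 := by
  ext i
  rw [mulVec_single_one]
  cases i using Fin.succAboveCases t <;> simp [insertRowCol]

theorem submatrix_insertRowCol (B : Matrix (Fin n) (Fin n) R) :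
    (insertRowCol t B).submatrix t.succAbove t.succAbove = B := by
  ext i j
  simp [insertRowCol]

theorem map_insertRowCol (f : R →+* S) (B : Matrix (Fin n) (Fin n) R) :
    (insertRowCol t B).map f = insertRowCol t (B.map f) := by
  simp only [insertRowCol, MonoidHom.coe_mk, OneHom.coe_mk, ← submatrix_map, fromBlocks_map]
  simp

end FinMatrix

theorem mem_Gamma2_iff {n : ℕ} (A : GL (Fin n) ℤ) :
    A ∈ Gamma2 n ↔ (A : Matrix (Fin n) (Fin n) ℤ).map (Int.castRingHom (ZMod 2)) = 1 := by
  rw [Gamma2, MonoidHom.mem_ker, Matrix.GeneralLinearGroup.map, Units.ext_iff]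
  rfl

theorem two_dvd_apply_of_mem_Gamma2 {n : ℕ} {A : GL (Fin n) ℤ} (hA : A ∈ Gamma2 n) {i j : Fin n}
    (hij : i ≠ j) : 2 ∣ (A : Matrix (Fin n) (Fin n) ℤ) i j := by
  have h := congrFun (congrFun ((mem_Gamma2_iff A).1 hA) i) j
  rwa [map_apply, one_apply_ne hij, eq_intCast, ZMod.intCast_zmod_eq_zero_iff_dvd] at h

section Gamma2Stab

variable {n : ℕ} (t : Fin (n + 1))

theorem apply_succAbove_of_mem_colStab {A : GL (Fin (n + 1)) ℤ} (hA : A ∈ colStab (n + 1) t)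
    (i : Fin n) : (A : Matrix (Fin (n + 1)) (Fin (n + 1)) ℤ) (t.succAbove i) t = 0 := by
  simpa [mulVec_single_one, Fin.succAbove_ne] using congrFun hA (t.succAbove i)

def rowUnipotentGamma2 : Multiplicative (Fin n → ℤ) →* gamma2Stab (n + 1) t :=
  ((rowUnipotent t).toHomUnits.comp (powMonoidHom 2)).codRestrict _ fun v => by
    refine ⟨(mem_Gamma2_iff _).2 ?_, rowUnipotent_mulVec_single t (2 • v.toAdd)⟩
    have h2 : Int.castRingHom (ZMod 2) ∘ (2 • v.toAdd) = 0 := by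
      ext i
      simp [show (2 : ZMod 2) = 0 from rfl]
    have h := map_rowUnipotent t (Int.castRingHom (ZMod 2)) (2 • v.toAdd)
    rwa [h2, ofAdd_zero, map_one] at h

theorem coe_rowUnipotentGamma2 (v : Fin n → ℤ) :
    ((rowUnipotentGamma2 t (.ofAdd v) : GL (Fin (n + 1)) ℤ) : Matrix _ _ ℤ) =
      rowUnipotent t (.ofAdd (2 • v)) := rfl

def deleteRowCol : gamma2Stab (n + 1) t →* Gamma2 n :=
  (MonoidHom.toHomUnits (G := gamma2Stab (n + 1) t)
    { toFun A := ((A : GL (Fin (n + 1)) ℤ) : Matrix _ _ ℤ).submatrix t.succAbove t.succAbove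
      map_one' := submatrix_one _ Fin.succAbove_right_injective
      map_mul' A B :=
        submatrix_succAbove_mul t
          (apply_succAbove_of_mem_colStab t (Subgroup.mem_inf.1 A.2).2) }).codRestrict _
    fun A => by
      rw [mem_Gamma2_iff, MonoidHom.coe_toHomUnits, MonoidHom.coe_mk, OneHom.coe_mk,
        ← submatrix_map, (mem_Gamma2_iff _).1 (Subgroup.mem_inf.1 A.2).1]
      exact submatrix_one _ Fin.succAbove_right_injective

theorem coe_deleteRowCol (A : gamma2Stab (n + 1) t) :
    ((deleteRowCol t A : GL (Fin n) ℤ) : Matrix _ _ ℤ) =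
      ((A : GL (Fin (n + 1)) ℤ) : Matrix _ _ ℤ).submatrix t.succAbove t.succAbove := rfl

theorem rowUnipotentGamma2_injective : Function.Injective (rowUnipotentGamma2 t) := by
  intro v w h
  have h2 : 2 • v.toAdd = 2 • w.toAdd :=
    rowUnipotent_injective t (Units.ext_iff.1 (Subtype.ext_iff.1 h))
  exact Multiplicative.toAdd.injective (smul_right_injective (Fin n → ℤ) two_ne_zero h2)

theorem deleteRowCol_surjective : Function.Surjective (deleteRowCol t) := by
  rintro ⟨B, hB⟩
  refine ⟨⟨Units.map (insertRowCol t) B, (mem_Gamma2_iff _).2 ?_, ?_⟩, ?_⟩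
  · rw [Units.coe_map, map_insertRowCol, (mem_Gamma2_iff B).1 hB, map_one]
  · exact insertRowCol_mulVec_single t (B : Matrix (Fin n) (Fin n) ℤ)
  · exact Subtype.ext (Units.ext (submatrix_insertRowCol t _))

theorem range_rowUnipotentGamma2 : (rowUnipotentGamma2 t).range = (deleteRowCol t).ker := by
  ext A
  rw [MonoidHom.mem_range, MonoidHom.mem_ker]
  obtain ⟨hA₂, hAcol⟩ := Subgroup.mem_inf.1 A.2
  constructor
  · rintro ⟨v, rfl⟩
    exact Subtype.ext (Units.ext (submatrix_rowUnipotent t _))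
  · intro hA
    have hsub := Units.ext_iff.1 (Subtype.ext_iff.1 hA)
    have heven i := two_dvd_apply_of_mem_Gamma2 hA₂ (Fin.ne_succAbove t i)
    refine ⟨.ofAdd fun i => A.1.1 t (t.succAbove i) / 2, Subtype.ext (Units.ext ?_)⟩
    rw [coe_rowUnipotentGamma2]
    convert (eq_rowUnipotent_of_submatrix_eq_one t hAcol hsub).symm using 3
    ext i
    exact Int.mul_ediv_cancel' (heven i)

theorem coe_rowUnipotentGamma2_single (i : Fin n) :
    ((rowUnipotentGamma2 t (.ofAdd (Pi.single i 1)) : GL (Fin (n + 1)) ℤ) : Matrix _ _ ℤ) =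
      Emat (n + 1) t (t.succAbove i) := by
  rw [coe_rowUnipotentGamma2, rowUnipotent_apply, Emat, ← Pi.single_smul',
    Fin.insertNth_zero_single, Pi.single_smul', vecMulVec_smul,
    ← single_eq_single_vecMulVec_single]

end Gamma2Stab

theorem gamma2_stab_short_exact (n : ℕ) (t : Fin (n + 1)) :
    ∃ (ψ : Multiplicative (Fin n → ℤ) →* ↥(gamma2Stab (n + 1) t))
      (φ : ↥(gamma2Stab (n + 1) t) →* ↥(Gamma2 n)),
      Function.Injective ψ ∧
      Function.Surjective φ ∧
      ψ.range = φ.ker ∧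
      (∀ i : Fin n,
        (((ψ (Multiplicative.ofAdd (Pi.single i 1)) : ↥(gamma2Stab (n + 1) t)) :
            GL (Fin (n + 1)) ℤ) : Matrix (Fin (n + 1)) (Fin (n + 1)) ℤ) =
          Emat (n + 1) t (t.succAbove i)) ∧
      (∀ A : ↥(gamma2Stab (n + 1) t),
        ((φ A : GL (Fin n) ℤ) : Matrix (Fin n) (Fin n) ℤ) =
          Matrix.submatrix ((A : GL (Fin (n + 1)) ℤ) : Matrix (Fin (n + 1)) (Fin (n + 1)) ℤ)
            t.succAbove t.succAbove) :=
  ⟨rowUnipotentGamma2 t, deleteRowCol t, rowUnipotentGamma2_injective t,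
    deleteRowCol_surjective t, range_rowUnipotentGamma2 t, coe_rowUnipotentGamma2_single t,
    coe_deleteRowCol t⟩
end

section
/- The group GL(2,ℤ) admits the presentation ⟨x, y, z | xyxy⁻¹x⁻¹y⁻¹, (xy)⁶, z², xzyz⟩, where x = [[1,−1],[0,1]], y = [[1,0],[1,1]], z = [[0,1],[1,0]]. -/
open Matrix

def xGL : GL (Fin 2) ℤ :=
  ⟨!![1, -1; 0, 1], !![1, 1; 0, 1], by decide, by decide⟩

def yGL : GL (Fin 2) ℤ :=
  ⟨!![1, 0; 1, 1], !![1, 0; -1, 1], by decide, by decide⟩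

def zGL : GL (Fin 2) ℤ :=
  ⟨!![0, 1; 1, 0], !![0, 1; 1, 0], by decide, by decide⟩

/-!
Surjectivity: `S = xyx` and `T = x⁻¹` generate `SL(2,ℤ)`, and `z` has determinant `-1`.

Injectivity: conjugation by `z` exchanges `x` and `y⁻¹`, so every element of the presented group
lies in `⟨x, y⟩` or in `z⟨x, y⟩`, and the second coset maps to determinant `-1`. Put `s = xyx`,
`t = xy`; then `⟨x, y⟩ = ⟨s, t⟩`, `s² = t³` and `s⁴ = 1`, and every element of `⟨s, t⟩` can be
written `tⁿ w sᶠ` with `w` a word in the letters `s³t` and `s³t²`. These letters map to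
`!![1, 1; 0, 1]` and `!![1, 0; 1, 1]`, so a nonempty word maps to a nonnegative, non-diagonal
matrix, whereas none of the finitely many matrices `tᵃ sᵇ` is of that kind. Hence only
`tⁿ sᶠ` can map to `1`, and a finite check shows that it is then trivial.
-/

open Subgroup

def IsNonnegNondiagonal (M : Matrix (Fin 2) (Fin 2) ℤ) : Prop :=
  0 ≤ M 0 0 ∧ 0 ≤ M 0 1 ∧ 0 ≤ M 1 0 ∧ 0 ≤ M 1 1 ∧ 0 < M 0 1 + M 1 0

instance : DecidablePred IsNonnegNondiagonal := fun _ => by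
  unfold IsNonnegNondiagonal; infer_instance

theorem IsNonnegNondiagonal.upper_mul {M : Matrix (Fin 2) (Fin 2) ℤ}
    (h : IsNonnegNondiagonal M) : IsNonnegNondiagonal (!![1, 1; 0, 1] * M) := by
  obtain ⟨h00, h01, h10, h11, h⟩ := h
  simp only [IsNonnegNondiagonal, mul_apply, of_apply, cons_val', cons_val_fin_one,
    cons_val_zero, cons_val_one, Fin.sum_univ_two, one_mul, zero_mul, zero_add]
  omega

theorem IsNonnegNondiagonal.lower_mul {M : Matrix (Fin 2) (Fin 2) ℤ}
    (h : IsNonnegNondiagonal M) : IsNonnegNondiagonal (!![1, 0; 1, 1] * M) := by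
  obtain ⟨h00, h01, h10, h11, h⟩ := h
  simp only [IsNonnegNondiagonal, mul_apply, of_apply, cons_val', cons_val_fin_one,
    cons_val_zero, cons_val_one, Fin.sum_univ_two, one_mul, zero_mul, add_zero]
  omega

theorem not_isNonnegNondiagonal_pow_mul_pow (a b : ℕ) :
    ¬ IsNonnegNondiagonal (!![0, -1; 1, 1] ^ a * !![0, -1; 1, 0] ^ b) := by
  rw [pow_eq_pow_mod a (by decide : (!![0, -1; 1, 1] : Matrix (Fin 2) (Fin 2) ℤ) ^ 6 = 1),
    pow_eq_pow_mod b (by decide : (!![0, -1; 1, 0] : Matrix (Fin 2) (Fin 2) ℤ) ^ 4 = 1)]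
  have key : ∀ a < 6, ∀ b < 4,
      ¬ IsNonnegNondiagonal (!![0, -1; 1, 1] ^ a * !![0, -1; 1, 0] ^ b) := by decide
  exact key _ (Nat.mod_lt _ (by norm_num)) _ (Nat.mod_lt _ (by norm_num))

theorem mod_eq_of_pow_mul_pow_eq_one {a b : ℕ}
    (h : (!![0, -1; 1, 1] : Matrix (Fin 2) (Fin 2) ℤ) ^ a * !![0, -1; 1, 0] ^ b = 1) :
    a % 6 = 0 ∧ b % 4 = 0 ∨ a % 6 = 3 ∧ b % 4 = 2 := by
  rw [pow_eq_pow_mod a (by decide : (!![0, -1; 1, 1] : Matrix (Fin 2) (Fin 2) ℤ) ^ 6 = 1),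
    pow_eq_pow_mod b (by decide : (!![0, -1; 1, 0] : Matrix (Fin 2) (Fin 2) ℤ) ^ 4 = 1)] at h
  have key : ∀ a < 6, ∀ b < 4,
      (!![0, -1; 1, 1] : Matrix (Fin 2) (Fin 2) ℤ) ^ a * !![0, -1; 1, 0] ^ b = 1 →
        a = 0 ∧ b = 0 ∨ a = 3 ∧ b = 2 := by decide
  exact key _ (Nat.mod_lt _ (by norm_num)) _ (Nat.mod_lt _ (by norm_num)) h

theorem det_xGL : GeneralLinearGroup.det xGL = 1 := Units.ext (by decide)

theorem det_yGL : GeneralLinearGroup.det yGL = 1 := Units.ext (by decide)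

theorem det_zGL : GeneralLinearGroup.det zGL = -1 := Units.ext (by decide)

open ModularGroup SpecialLinearGroup MatrixGroups in
theorem closure_xGL_yGL_zGL_eq_top : Subgroup.closure {xGL, yGL, zGL} = ⊤ := by
  set K : Subgroup (GL (Fin 2) ℤ) := closure {xGL, yGL, zGL}
  have hx : xGL ∈ K := subset_closure (by simp)
  have hz : zGL ∈ K := subset_closure (by simp)
  have hSL : ∀ A : SL(2, ℤ), toGL A ∈ K := by
    intro A
    refine (closure_le (K.comap toGL)).2 ?_ (SL2Z_generators ▸ mem_top A)
    rw [Set.insert_subset_iff, Set.singleton_subset_iff, SetLike.mem_coe, mem_comap,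
      SetLike.mem_coe, mem_comap,
      show toGL S = xGL * yGL * xGL from Units.ext (by rw [coe_GL_coe_matrix, coe_S]; decide),
      show toGL T = xGL⁻¹ from Units.ext (by rw [coe_GL_coe_matrix, coe_T]; decide)]
    exact ⟨mul_mem (mul_mem hx (subset_closure (by simp))) hx, inv_mem hx⟩
  have hdet : ∀ g : GL (Fin 2) ℤ, GeneralLinearGroup.det g = 1 → g ∈ K := fun g h ↦
    (show toGL ⟨g, by rw [← GeneralLinearGroup.val_det_apply, h, Units.val_one]⟩ = g from
      Units.ext rfl) ▸ hSL _
  rw [eq_top_iff']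
  intro g
  rcases Int.units_eq_one_or (GeneralLinearGroup.det g) with h | h
  · exact hdet g h
  · have hzg : GeneralLinearGroup.det (zGL * g) = 1 := by rw [map_mul, det_zGL, h]; decide
    have hzz : zGL * zGL = 1 := Units.ext (by decide)
    simpa only [← mul_assoc, hzz, one_mul] using mul_mem hz (hdet _ hzg)

section NormalForm

variable {G : Type*} [Group G]

theorem inv_mul_mem_of_pow_succ_eq_one {X : Set G} {a : G} {k : ℕ} (ha : a ^ (k + 1) = 1)
    (hX : ∀ g ∈ X, a * g ∈ X) {g : G} (hg : g ∈ X) : a⁻¹ * g ∈ X := by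
  have hpow : ∀ n : ℕ, a ^ n * g ∈ X := by
    intro n
    induction n with
    | zero => simpa using hg
    | succ n ih => simpa only [pow_succ', mul_assoc] using hX _ ih
  rw [← eq_inv_of_mul_eq_one_left (by rwa [← pow_succ])]
  exact hpow k

theorem mem_or_mul_mem_of_mem_closure_insert {H : Subgroup G} {S : Set G} {z : G}
    (hSH : S ⊆ H) (hz : z * z ∈ H) (hconj : ∀ a ∈ S, z * a * z⁻¹ ∈ H) {g : G}
    (hg : g ∈ closure (insert z S)) : g ∈ H ∨ z * g ∈ H := by
  induction hg using closure_induction_left with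
  | one => exact .inl (one_mem H)
  | mul_left a ha g _ ih =>
    rcases ha with rfl | ha
    · rcases ih with ih | ih
      · exact .inr (by simpa only [mul_assoc] using mul_mem hz ih)
      · exact .inl ih
    · rcases ih with ih | ih
      · exact .inl (mul_mem (hSH ha) ih)
      · exact .inr (by simpa only [mul_assoc, inv_mul_cancel_left] using mul_mem (hconj a ha) ih)
  | inv_mul_cancel a ha g _ ih =>
    rcases ha with rfl | ha
    · rcases ih with ih | ih
      · exact .inr (by rwa [mul_inv_cancel_left])
      · have h := mul_mem (inv_mem hz) ih
        rw [_root_.mul_inv_rev, mul_assoc, inv_mul_cancel_left] at h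
        exact .inl h
    · rcases ih with ih | ih
      · exact .inl (mul_mem (inv_mem (hSH ha)) ih)
      · have h := mul_mem (inv_mem (hconj a ha)) ih
        rw [_root_.mul_inv_rev, _root_.mul_inv_rev, inv_inv, mul_assoc, mul_assoc,
          inv_mul_cancel_left] at h
        exact .inr h

def positiveWords (s t : G) : Submonoid G :=
  Submonoid.closure {s ^ 3 * t, s ^ 3 * t ^ 2}

def NormalForm (s t : G) : Set G :=
  {g | ∃ n f : ℕ, ∃ w ∈ positiveWords s t, g = t ^ n * w * s ^ f}

theorem t_mul_mem_normalForm {s t g : G} (hg : g ∈ NormalForm s t) :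
    t * g ∈ NormalForm s t := by
  obtain ⟨n, f, w, hw, rfl⟩ := hg
  exact ⟨n + 1, f, w, hw, by simp only [pow_succ', mul_assoc]⟩

theorem s_mul_mem_normalForm {s t g : G} (hst : s ^ 2 = t ^ 3) (hs : s ^ 4 = 1)
    (hg : g ∈ NormalForm s t) : s * g ∈ NormalForm s t := by
  obtain ⟨n, f, w, hw, rfl⟩ := hg
  obtain ⟨q, r, hr, rfl⟩ : ∃ q r, r < 3 ∧ n = 3 * q + r :=
    ⟨n / 3, n % 3, Nat.mod_lt _ (by norm_num), (Nat.div_add_mod n 3).symm⟩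
  have hcomm : s * t ^ (3 * q) = t ^ (3 * q) * s := by
    rw [pow_mul, ← hst]
    exact ((Commute.self_pow s 2).pow_right q).eq
  rcases Nat.eq_zero_or_pos r with rfl | hr0
  · induction hw using Submonoid.closure_induction_left with
    | one =>
      refine ⟨3 * q, f + 1, 1, one_mem _, ?_⟩
      rw [add_zero, ← mul_assoc, ← mul_assoc, hcomm]
      simp only [pow_succ', mul_one, mul_assoc]
    | mul_left a ha w hw _ =>
      obtain ⟨k, rfl⟩ : ∃ k, a = s ^ 3 * t ^ k := by
        rcases ha with rfl | rfl
        exacts [⟨1, by rw [pow_one]⟩, ⟨2, rfl⟩]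
      refine ⟨3 * q + k, f, w, hw, ?_⟩
      rw [add_zero, ← mul_assoc, ← mul_assoc, hcomm, pow_add]
      simp only [mul_assoc]
      rw [← mul_assoc s, ← pow_succ', hs, one_mul]
  · have hletter : s ^ 3 * t ^ r ∈ positiveWords s t :=
      Submonoid.subset_closure (by interval_cases r <;> simp)
    have hs5 : s = t ^ 3 * s ^ 3 := by
      rw [← hst, ← pow_add, show 2 + 3 = 4 + 1 from rfl, pow_succ, hs, one_mul]
    refine ⟨3 * q + 3, f, s ^ 3 * t ^ r * w, mul_mem hletter hw, ?_⟩
    rw [pow_add, ← mul_assoc, ← mul_assoc, ← mul_assoc, hcomm]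
    nth_rewrite 1 [hs5]
    simp only [pow_add, mul_assoc]

theorem mem_normalForm_of_mem_closure {s t g : G} (hst : s ^ 2 = t ^ 3) (hs : s ^ 4 = 1)
    (hg : g ∈ closure {s, t}) : g ∈ NormalForm s t := by
  have ht : t ^ 6 = 1 := by rw [show 6 = 3 * 2 from rfl, pow_mul, ← hst, ← pow_mul, hs]
  induction hg using closure_induction_left with
  | one => exact ⟨0, 0, 1, one_mem _, by simp⟩
  | mul_left a ha g _ ih =>
    rcases ha with rfl | rfl
    exacts [s_mul_mem_normalForm hst hs ih, t_mul_mem_normalForm ih]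
  | inv_mul_cancel a ha g _ ih =>
    rcases ha with rfl | rfl
    · exact inv_mul_mem_of_pow_succ_eq_one hs (fun _ ↦ s_mul_mem_normalForm hst hs) ih
    · exact inv_mul_mem_of_pow_succ_eq_one ht (fun _ ↦ t_mul_mem_normalForm) ih

theorem eq_one_or_isNonnegNondiagonal_of_mem_positiveWords {s t w : G}
    {ψ : G →* Matrix (Fin 2) (Fin 2) ℤ} (hψs : ψ s = !![0, -1; 1, 0])
    (hψt : ψ t = !![0, -1; 1, 1]) (hw : w ∈ positiveWords s t) :
    w = 1 ∨ IsNonnegNondiagonal (ψ w) := by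
  induction hw using Submonoid.closure_induction_left with
  | one => exact .inl rfl
  | mul_left a ha w _ ih =>
    refine .inr ?_
    rcases ha with rfl | rfl
    · have hU : ψ (s ^ 3 * t) = !![1, 1; 0, 1] := by rw [map_mul, map_pow, hψs, hψt]; decide
      rcases ih with rfl | ih
      · rw [mul_one, hU]; decide
      · rw [map_mul, hU]; exact ih.upper_mul
    · have hL : ψ (s ^ 3 * t ^ 2) = !![1, 0; 1, 1] := by
        rw [map_mul, map_pow, map_pow, hψs, hψt]; decide
      rcases ih with rfl | ih
      · rw [mul_one, hL]; decide
      · rw [map_mul, hL]; exact ih.lower_mul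

theorem eq_one_of_mem_normalForm {s t g : G} (hst : s ^ 2 = t ^ 3) (hs : s ^ 4 = 1)
    {ψ : G →* Matrix (Fin 2) (Fin 2) ℤ} (hψs : ψ s = !![0, -1; 1, 0])
    (hψt : ψ t = !![0, -1; 1, 1]) (hg : g ∈ NormalForm s t) (h1 : ψ g = 1) : g = 1 := by
  have ht : t ^ 6 = 1 := by rw [show 6 = 3 * 2 from rfl, pow_mul, ← hst, ← pow_mul, hs]
  obtain ⟨n, f, w, hw, rfl⟩ := hg
  rcases eq_one_or_isNonnegNondiagonal_of_mem_positiveWords hψs hψt hw with rfl | hpos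
  · rw [mul_one, map_mul, map_pow, map_pow, hψs, hψt] at h1
    rw [mul_one, pow_eq_pow_mod n ht, pow_eq_pow_mod f hs]
    rcases mod_eq_of_pow_mul_pow_eq_one h1 with ⟨hn, hf⟩ | ⟨hn, hf⟩
    · rw [hn, hf, pow_zero, pow_zero, one_mul]
    · rw [hn, hf, ← hst, ← pow_add, hs]
  · have hw' : w = t ^ (5 * n) * (t ^ n * w * s ^ f) * s ^ (3 * f) := by
      rw [← mul_assoc, ← mul_assoc, ← pow_add, show 5 * n + n = 6 * n by ring, pow_mul, ht,
        one_pow, one_mul, mul_assoc, ← pow_add, show f + 3 * f = 4 * f by ring, pow_mul, hs,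
        one_pow, mul_one]
    rw [hw', map_mul, map_mul, h1, mul_one, map_pow, map_pow, hψs, hψt] at hpos
    exact absurd hpos (not_isNonnegNondiagonal_pow_mul_pow _ _)

theorem closure_pair_le_closure_xyx_xy (x y : G) :
    closure {x, y} ≤ closure {x * y * x, x * y} := by
  have hs : x * y * x ∈ closure {x * y * x, x * y} := subset_closure (by simp)
  have ht : x * y ∈ closure {x * y * x, x * y} := subset_closure (by simp)
  have hx : x ∈ closure {x * y * x, x * y} := by
    simpa only [inv_mul_cancel_left] using mul_mem (inv_mem ht) hs
  have hy : y ∈ closure {x * y * x, x * y} := by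
    simpa only [inv_mul_cancel_left] using mul_mem (inv_mem hx) ht
  rw [closure_le, Set.insert_subset_iff, Set.singleton_subset_iff]
  exact ⟨hx, hy⟩

theorem eq_one_of_mem_closure_pair {x y g : G} (hbraid : x * y * x = y * x * y)
    (hxy : (x * y) ^ 6 = 1) {ψ : G →* Matrix (Fin 2) (Fin 2) ℤ} (hψx : ψ x = !![1, -1; 0, 1])
    (hψy : ψ y = !![1, 0; 1, 1]) (hg : g ∈ closure {x, y}) (h1 : ψ g = 1) : g = 1 := by
  have hst : (x * y * x) ^ 2 = (x * y) ^ 3 := by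
    calc (x * y * x) ^ 2 = x * y * x * (x * y * x) := sq _
      _ = x * y * x * (y * x * y) := by rw [hbraid]
      _ = (x * y) ^ 3 := by simp only [pow_succ, pow_zero, one_mul, mul_assoc]
  have hs : (x * y * x) ^ 4 = 1 := by
    rw [show 4 = 2 * 2 from rfl, pow_mul, hst, ← pow_mul]
    exact hxy
  refine eq_one_of_mem_normalForm hst hs ?_ ?_
    (mem_normalForm_of_mem_closure hst hs (closure_pair_le_closure_xyx_xy x y hg)) h1
  · rw [map_mul, map_mul, hψx, hψy]; decide
  · rw [map_mul, hψx, hψy]; decide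

theorem injective_of_gl2_relations {x y z : G} (hgen : closure {x, y, z} = ⊤)
    (hbraid : x * y * x = y * x * y) (hxy : (x * y) ^ 6 = 1) (hz : z * z = 1)
    (hxzyz : x * z * y * z = 1) {ψ : G →* GL (Fin 2) ℤ} (hψx : ψ x = xGL) (hψy : ψ y = yGL)
    (hψz : ψ z = zGL) : Function.Injective ψ := by
  have hz' : z⁻¹ = z := inv_eq_of_mul_eq_one_right hz
  have hzyz : z * y * z⁻¹ = x⁻¹ := by
    rw [hz', eq_inv_iff_mul_eq_one]
    calc z * y * z * x = x⁻¹ * (x * z * y * z) * x := by group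
      _ = 1 := by rw [hxzyz, mul_one, inv_mul_cancel]
  have hzxz : z * x * z⁻¹ = y⁻¹ := by
    rw [hz', eq_inv_iff_mul_eq_one]
    calc z * x * z * y = z * (x * z * y * z) * z⁻¹ := by group
      _ = 1 := by rw [hxzyz, mul_one, mul_inv_cancel]
  have hdet : ∀ h ∈ closure {x, y}, GeneralLinearGroup.det (ψ h) = 1 := by
    intro h hh
    refine (closure_le (GeneralLinearGroup.det.comp ψ).ker).2 ?_ hh
    rw [Set.insert_subset_iff, Set.singleton_subset_iff]
    exact ⟨by simp [hψx, det_xGL], by simp [hψy, det_yGL]⟩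
  rw [injective_iff_map_eq_one]
  intro g hg
  have hgen' : g ∈ closure (insert z {x, y}) := by
    rw [Set.insert_comm, Set.pair_comm z y, hgen]
    exact mem_top g
  have hconj : ∀ a ∈ ({x, y} : Set G), z * a * z⁻¹ ∈ closure {x, y} := by
    rintro a (rfl | rfl)
    · exact hzxz ▸ inv_mem (subset_closure (by simp))
    · exact hzyz ▸ inv_mem (subset_closure (by simp))
  rcases mem_or_mul_mem_of_mem_closure_insert subset_closure (hz ▸ one_mem _) hconj hgen'
    with hg' | hzg
  · refine eq_one_of_mem_closure_pair hbraid hxy (ψ := (Units.coeHom _).comp ψ) ?_ ?_ hg' ?_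
    · rw [MonoidHom.comp_apply, hψx]; rfl
    · rw [MonoidHom.comp_apply, hψy]; rfl
    · rw [MonoidHom.comp_apply, hg, map_one]
  · have h := hdet _ hzg
    rw [map_mul, hg, mul_one, hψz, det_zGL] at h
    exact absurd h (by decide)

end NormalForm

theorem FreeGroup.ker_lift_eq_normalClosure {α H : Type*} [Group H] {f : α → H}
    {rels : Set (FreeGroup α)} (h : ∀ r ∈ rels, FreeGroup.lift f r = 1)
    (hinj : Function.Injective (PresentedGroup.toGroup h)) :
    (FreeGroup.lift f).ker = normalClosure rels := by
  ext w
  rw [MonoidHom.mem_ker, ← PresentedGroup.mk_eq_one_iff, ← hinj.eq_iff' (_root_.map_one _)]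
  rfl

def gl2Generators : Fin 3 → GL (Fin 2) ℤ :=
  fun b => if b = 0 then xGL else if b = 1 then yGL else zGL

def gl2Relators : Set (FreeGroup (Fin 3)) :=
  { FreeGroup.of 0 * FreeGroup.of 1 * FreeGroup.of 0 * (FreeGroup.of 1)⁻¹ *
      (FreeGroup.of 0)⁻¹ * (FreeGroup.of 1)⁻¹,
    (FreeGroup.of 0 * FreeGroup.of 1) ^ 6,
    FreeGroup.of 2 * FreeGroup.of 2,
    FreeGroup.of 0 * FreeGroup.of 2 * FreeGroup.of 1 * FreeGroup.of 2 }

theorem lift_gl2Generators_relator : ∀ r ∈ gl2Relators, FreeGroup.lift gl2Generators r = 1 := by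
  rintro r (rfl | rfl | rfl | rfl) <;>
    simp only [map_mul, map_inv, map_pow, FreeGroup.lift_apply_of] <;> decide

theorem surjective_lift_gl2Generators : Function.Surjective (FreeGroup.lift gl2Generators) := by
  rw [← MonoidHom.range_eq_top, FreeGroup.range_lift_eq_closure, eq_top_iff,
    ← closure_xGL_yGL_zGL_eq_top]
  refine closure_mono ?_
  rintro _ (rfl | rfl | rfl)
  exacts [⟨0, rfl⟩, ⟨1, rfl⟩, ⟨2, rfl⟩]

theorem injective_toGroup_gl2Relators :
    Function.Injective (PresentedGroup.toGroup lift_gl2Generators_relator) := by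
  set x : PresentedGroup gl2Relators := .of 0
  set y : PresentedGroup gl2Relators := .of 1
  set z : PresentedGroup gl2Relators := .of 2
  have hgen : closure {x, y, z} = ⊤ := by
    refine (eq_top_iff' _).2 (PresentedGroup.generated_by _ _ fun j ↦ ?_)
    fin_cases j
    exacts [subset_closure (.inl rfl), subset_closure (.inr (.inl rfl)),
      subset_closure (.inr (.inr rfl))]
  have hrel : ∀ {r}, r ∈ gl2Relators → PresentedGroup.mk gl2Relators r = 1 :=
    PresentedGroup.one_of_mem
  have hbraid : x * y * x * y⁻¹ * x⁻¹ * y⁻¹ = 1 := hrel (Or.inl rfl)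
  have hxy : (x * y) ^ 6 = 1 := hrel (Or.inr (Or.inl rfl))
  have hz : z * z = 1 := hrel (Or.inr (Or.inr (Or.inl rfl)))
  have hxzyz : x * z * y * z = 1 := hrel (Or.inr (Or.inr (Or.inr rfl)))
  refine injective_of_gl2_relations hgen ?_ hxy hz hxzyz ?_ ?_ ?_
  · exact mul_inv_eq_one.mp (by simpa only [_root_.mul_inv_rev, mul_assoc] using hbraid)
  all_goals exact PresentedGroup.toGroup.of _

/-- GL(2,ℤ) = ⟨x, y, z ∣ xyxy⁻¹x⁻¹y⁻¹, (xy)⁶, z², xzyz⟩ -/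
theorem gl2_presentation :
    Function.Surjective
      (FreeGroup.lift (fun b : Fin 3 => if b = 0 then xGL else if b = 1 then yGL else zGL)) ∧
    (FreeGroup.lift (fun b : Fin 3 => if b = 0 then xGL else if b = 1 then yGL else zGL)).ker =
      Subgroup.normalClosure
        ({ FreeGroup.of 0 * FreeGroup.of 1 * FreeGroup.of 0 * (FreeGroup.of 1)⁻¹ *
             (FreeGroup.of 0)⁻¹ * (FreeGroup.of 1)⁻¹,
           (FreeGroup.of 0 * FreeGroup.of 1) ^ 6,
           FreeGroup.of 2 * FreeGroup.of 2,
           FreeGroup.of 0 * FreeGroup.of 2 * FreeGroup.of 1 * FreeGroup.of 2 } :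
          Set (FreeGroup (Fin 3))) :=
  ⟨surjective_lift_gl2Generators,
    FreeGroup.ker_lift_eq_normalClosure _ injective_toGroup_gl2Relators⟩
end
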